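/- arXiv:1712.00417 — 5 statements merged into one kernel-verified Lean document; each statement's English description precedes it below -/
import Mathlib

section
/- The function u(x,t) = A·dn(B(x−x₀(t)) | k)·exp(i(ξ(x−x₀(t)) + σ(t) − σ₀)) solves the detuned nonlinear Schrödinger equation i·u_t − (β/2)·u_xx + |u|²u − αu = 0, provided A² = −βB², dx₀/dt = −βξ, and dσ/dt = −α − (β/2)B²(2−k²) − (β/2)ξ². -/
/-- The dn-profile travelling/rotating wave solves the detuned NLSE. -/
theorem stmt_0 (β α k A B ξ σ₀ : ℝ) (hβ : β < 0) (hk0 : 0 < k) (hk1 : k < 1)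
    (hA : 0 < A) (hB : 0 < B) (hA2 : A ^ 2 = -β * B ^ 2)
    (dn : ℝ → ℝ) (hdn_smooth : ContDiff ℝ (⊤ : ℕ∞) dn) (hdn0 : dn 0 = 1)
    (hdn_ode : ∀ z, deriv (deriv dn) z = (2 - k ^ 2) * dn z - 2 * dn z ^ 3)
    (hdn_sq : ∀ z, (deriv dn z) ^ 2 = (1 - dn z ^ 2) * (dn z ^ 2 - (1 - k ^ 2)))
    (x₀ σ : ℝ → ℝ)
    (hx₀ : ∀ t, HasDerivAt x₀ (-β * ξ) t)
    (hσ : ∀ t, HasDerivAt σ (-α - β / 2 * B ^ 2 * (2 - k ^ 2) - β / 2 * ξ ^ 2) t)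
    (u : ℝ → ℝ → ℂ)
    (hu : ∀ x t, u x t = (A : ℂ) * (dn (B * (x - x₀ t)) : ℂ) *
      Complex.exp (Complex.I * ((ξ * (x - x₀ t) + σ t - σ₀ : ℝ) : ℂ))) :
    ∀ x t : ℝ,
      Complex.I * deriv (fun s => u x s) t
        - (β / 2 : ℂ) * deriv (deriv fun y => u y t) x
        + (‖u x t‖ : ℂ) ^ 2 * u x t - (α : ℂ) * u x t = 0 := by
  intro x t
  have hdn' : ∀ z, HasDerivAt dn (deriv dn z) z := fun z =>
    (hdn_smooth.differentiable (by simp) z).hasDerivAt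
  have h0 : ContDiff ℝ ((⊤:ℕ∞):WithTop ℕ∞) dn := hdn_smooth.of_le (mod_cast le_top)
  have hddC := (contDiff_infty_iff_deriv.mp h0).2
  have hdd' : ∀ z, HasDerivAt (deriv dn) (deriv (deriv dn) z) z := fun z =>
    (hddC.differentiable (by simp) z).hasDerivAt
  set σ' : ℝ := -α - β / 2 * B ^ 2 * (2 - k ^ 2) - β / 2 * ξ ^ 2 with hσ'def
  -- notation
  set z : ℝ := B * (x - x₀ t) with hz
  set E : ℂ := Complex.exp (Complex.I * ((ξ * (x - x₀ t) + σ t - σ₀ : ℝ) : ℂ)) with hE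
  -- spatial first derivative, at any point y
  have hspace : ∀ y : ℝ, HasDerivAt (fun y => u y t)
      ((A : ℂ) * ((deriv dn (B * (y - x₀ t)) * B : ℝ) : ℂ) *
          Complex.exp (Complex.I * ((ξ * (y - x₀ t) + σ t - σ₀ : ℝ) : ℂ))
        + (A : ℂ) * ((dn (B * (y - x₀ t)) : ℝ) : ℂ) *
          (Complex.exp (Complex.I * ((ξ * (y - x₀ t) + σ t - σ₀ : ℝ) : ℂ)) *
            (Complex.I * (ξ : ℂ)))) y := by
    intro y
    have h1 : HasDerivAt (fun y : ℝ => B * (y - x₀ t)) B y := by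
      simpa using ((hasDerivAt_id y).sub_const (x₀ t)).const_mul B
    have h2 : HasDerivAt (fun y : ℝ => dn (B * (y - x₀ t)))
        (deriv dn (B * (y - x₀ t)) * B) y := (hdn' _).comp y h1
    have h3 : HasDerivAt (fun y : ℝ => ξ * (y - x₀ t) + σ t - σ₀) ξ y := by
      simpa using ((((hasDerivAt_id y).sub_const (x₀ t)).const_mul ξ).add_const (σ t)).sub_const σ₀
    have h4 : HasDerivAt (fun y : ℝ => Complex.I * ((ξ * (y - x₀ t) + σ t - σ₀ : ℝ) : ℂ))
        (Complex.I * (ξ : ℂ)) y := h3.ofReal_comp.const_mul Complex.I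
    have h5 := h4.cexp
    have h6 := (h2.ofReal_comp.const_mul (A : ℂ)).mul h5
    have : (fun y => u y t) = fun y => (A : ℂ) * ((dn (B * (y - x₀ t)) : ℝ) : ℂ) *
        Complex.exp (Complex.I * ((ξ * (y - x₀ t) + σ t - σ₀ : ℝ) : ℂ)) :=
      funext fun y => hu y t
    rw [this]
    exact h6.congr_deriv (by push_cast; ring)
  have hD1 : deriv (fun y => u y t) = fun y =>
      (A : ℂ) * ((deriv dn (B * (y - x₀ t)) * B : ℝ) : ℂ) *
          Complex.exp (Complex.I * ((ξ * (y - x₀ t) + σ t - σ₀ : ℝ) : ℂ))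
        + (A : ℂ) * ((dn (B * (y - x₀ t)) : ℝ) : ℂ) *
          (Complex.exp (Complex.I * ((ξ * (y - x₀ t) + σ t - σ₀ : ℝ) : ℂ)) *
            (Complex.I * (ξ : ℂ))) := funext fun y => (hspace y).deriv
  -- spatial second derivative at x
  have hspace2 : HasDerivAt (deriv (fun y => u y t))
      ((A : ℂ) * ((deriv (deriv dn) z * B * B : ℝ) : ℂ) * E
        + (A : ℂ) * ((deriv dn z * B : ℝ) : ℂ) * (E * (Complex.I * (ξ : ℂ)))
        + ((A : ℂ) * ((deriv dn z * B : ℝ) : ℂ) * (E * (Complex.I * (ξ : ℂ)))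
          + (A : ℂ) * ((dn z : ℝ) : ℂ) *
            (E * (Complex.I * (ξ : ℂ)) * (Complex.I * (ξ : ℂ))))) x := by
    rw [hD1]
    have h1 : HasDerivAt (fun y : ℝ => B * (y - x₀ t)) B x := by
      simpa using ((hasDerivAt_id x).sub_const (x₀ t)).const_mul B
    have h2 : HasDerivAt (fun y : ℝ => dn (B * (y - x₀ t))) (deriv dn z * B) x :=
      (hdn' _).comp x h1
    have h2' : HasDerivAt (fun y : ℝ => deriv dn (B * (y - x₀ t)))
        (deriv (deriv dn) z * B) x := (hdd' _).comp x h1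
    have h3 : HasDerivAt (fun y : ℝ => ξ * (y - x₀ t) + σ t - σ₀) ξ x := by
      simpa using ((((hasDerivAt_id x).sub_const (x₀ t)).const_mul ξ).add_const (σ t)).sub_const σ₀
    have h5 := (h3.ofReal_comp.const_mul Complex.I).cexp
    have h6 : HasDerivAt (fun y : ℝ => (A : ℂ) * ((deriv dn (B * (y - x₀ t)) * B : ℝ) : ℂ) *
        Complex.exp (Complex.I * ((ξ * (y - x₀ t) + σ t - σ₀ : ℝ) : ℂ)))
        ((A : ℂ) * ((deriv (deriv dn) z * B * B : ℝ) : ℂ) * E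
          + (A : ℂ) * ((deriv dn z * B : ℝ) : ℂ) * (E * (Complex.I * (ξ : ℂ)))) x := by
      have := (((h2'.mul_const B).ofReal_comp).const_mul (A : ℂ)).mul h5
      exact this.congr_deriv (by simp only [hE, hz])
    have h7 : HasDerivAt (fun y : ℝ => (A : ℂ) * ((dn (B * (y - x₀ t)) : ℝ) : ℂ) *
        (Complex.exp (Complex.I * ((ξ * (y - x₀ t) + σ t - σ₀ : ℝ) : ℂ)) *
          (Complex.I * (ξ : ℂ))))
        ((A : ℂ) * ((deriv dn z * B : ℝ) : ℂ) * (E * (Complex.I * (ξ : ℂ)))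
          + (A : ℂ) * ((dn z : ℝ) : ℂ) *
            (E * (Complex.I * (ξ : ℂ)) * (Complex.I * (ξ : ℂ)))) x := by
      have := ((h2.ofReal_comp.const_mul (A : ℂ)).mul (h5.mul_const (Complex.I * (ξ : ℂ))))
      exact this.congr_deriv (by simp only [hE, hz])
    exact h6.add h7
  -- time derivative at t
  have htime : HasDerivAt (fun s => u x s)
      ((A : ℂ) * ((deriv dn z * (B * (β * ξ)) : ℝ) : ℂ) * E
        + (A : ℂ) * ((dn z : ℝ) : ℂ) *
          (E * (Complex.I * ((ξ * (β * ξ) + σ' : ℝ) : ℂ)))) t := by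
    have hx1 : HasDerivAt (fun s : ℝ => x - x₀ s) (β * ξ) t := by
      simpa using (hx₀ t).const_sub x
    have h1 : HasDerivAt (fun s : ℝ => B * (x - x₀ s)) (B * (β * ξ)) t := hx1.const_mul B
    have h2 : HasDerivAt (fun s : ℝ => dn (B * (x - x₀ s))) (deriv dn z * (B * (β * ξ))) t :=
      (hdn' _).comp t h1
    have h3 : HasDerivAt (fun s : ℝ => ξ * (x - x₀ s) + σ s - σ₀) (ξ * (β * ξ) + σ') t :=
      ((hx1.const_mul ξ).add (hσ t)).sub_const σ₀
    have h5 := (h3.ofReal_comp.const_mul Complex.I).cexp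
    have h6 := (h2.ofReal_comp.const_mul (A : ℂ)).mul h5
    have : (fun s => u x s) = fun s => (A : ℂ) * ((dn (B * (x - x₀ s)) : ℝ) : ℂ) *
        Complex.exp (Complex.I * ((ξ * (x - x₀ s) + σ s - σ₀ : ℝ) : ℂ)) :=
      funext fun s => hu x s
    rw [this]
    exact h6.congr_deriv (by simp only [hE, hz])
  -- modulus
  have habs : (‖u x t‖ : ℂ) ^ 2 = ((A : ℂ) * ((dn z : ℝ) : ℂ)) ^ 2 := by
    rw [hu x t]
    rw [norm_mul, norm_mul, Complex.norm_exp]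
    have h1 : (Complex.I * ((ξ * (x - x₀ t) + σ t - σ₀ : ℝ) : ℂ)).re = 0 := by simp
    rw [h1, Real.exp_zero, mul_one, Complex.norm_real, Complex.norm_real, Real.norm_eq_abs, Real.norm_eq_abs]
    norm_cast
    rw [mul_pow, mul_pow, sq_abs, sq_abs]
  -- assemble
  rw [htime.deriv, hspace2.deriv, habs, hu x t]
  have hode : ((deriv (deriv dn) z : ℝ) : ℂ) = (2 - (k : ℂ) ^ 2) * (dn z : ℂ) - 2 * (dn z : ℂ) ^ 3 := by
    exact_mod_cast congrArg (fun r : ℝ => (r : ℂ)) (hdn_ode z)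
  have hA2c : (A : ℂ) ^ 2 = -(β : ℂ) * (B : ℂ) ^ 2 := by exact_mod_cast hA2
  have hE0 : E = Complex.exp (Complex.I * ((ξ * (x - x₀ t) + σ t - σ₀ : ℝ) : ℂ)) := hE
  rw [← hE0, hσ'def]
  push_cast
  linear_combination (-(β : ℂ) / 2 * B ^ 2 * A * E) * hode +
    ((dn z : ℂ) ^ 3 * E * A) * hA2c +
    (-(A : ℂ) * B ^ 2 * β * E * (dn z : ℂ) + (A : ℂ) * B ^ 2 * β * E * (dn z : ℂ) * k ^ 2 / 2
      - (A : ℂ) * E * (dn z : ℂ) * α) * Complex.I_sq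
end

section
/- Let φ(z) = (K·E(z,k) − E·z)·dn z − k²·K·sn z·cn z, where K = K(k) and E = E(k) are the complete elliptic integrals of the first and second kind and E(z,k) = ∫₀ᶻ dn²y dy. Then L₋[φ] = −2k²E·sn z·cn z, and consequently L₊L₋[φ] = 0. -/
open MeasureTheory

/-- Complete elliptic integral of the first kind. -/
noncomputable def ellipticK (k : ℝ) : ℝ :=
  ∫ θ in (0:ℝ)..(Real.pi / 2), 1 / Real.sqrt (1 - k ^ 2 * Real.sin θ ^ 2)

/-- Complete elliptic integral of the second kind. -/
noncomputable def ellipticE (k : ℝ) : ℝ :=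
  ∫ θ in (0:ℝ)..(Real.pi / 2), Real.sqrt (1 - k ^ 2 * Real.sin θ ^ 2)

/-- The operator L₋f = −f'' − (2 dn²z + k² − 2)f. -/
noncomputable def Lm (k : ℝ) (dn : ℝ → ℝ) (f : ℝ → ℝ) : ℝ → ℝ :=
  fun z => -(deriv (deriv f) z) - (2 * dn z ^ 2 + k ^ 2 - 2) * f z

/-- The operator L₊f = −f'' − (6 dn²z + k² − 2)f. -/
noncomputable def Lp (k : ℝ) (dn : ℝ → ℝ) (f : ℝ → ℝ) : ℝ → ℝ :=
  fun z => -(deriv (deriv f) z) - (6 * dn z ^ 2 + k ^ 2 - 2) * f z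

/-!
K(k) and E(k) play the role of arbitrary constants; everything follows from the system
sn' = cn dn, cn' = −sn dn, dn' = −k² sn cn with its initial values. Differentiating
sn² + cn² and dn² + k² sn² shows that both are identically 1, and modulo these two identities
L₋φ and L₊(sn cn) reduce to polynomial identities once φ'' and (sn cn)'' are expanded (E(z, k) is
differentiated by the fundamental theorem of calculus). Since sn cn = −dn'/k² is the translation
mode of L₊, the second claim follows from the first.
-/

theorem deriv_deriv_eq_of_hasDerivAt {f f' f'' : ℝ → ℝ} (hf : ∀ z, HasDerivAt f (f' z) z)
    (hf' : ∀ z, HasDerivAt f' (f'' z) z) (z : ℝ) : deriv (deriv f) z = f'' z := by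
  rw [show deriv f = f' from funext fun z => (hf z).deriv]
  exact (hf' z).deriv

structure JacobiODE (k : ℝ) (sn cn dn : ℝ → ℝ) : Prop where
  sn_zero : sn 0 = 0
  cn_zero : cn 0 = 1
  dn_zero : dn 0 = 1
  hasDerivAt_sn : ∀ z, HasDerivAt sn (cn z * dn z) z
  hasDerivAt_cn : ∀ z, HasDerivAt cn (-(sn z * dn z)) z
  hasDerivAt_dn : ∀ z, HasDerivAt dn (-(k ^ 2 * sn z * cn z)) z

namespace JacobiODE

variable {k : ℝ} {sn cn dn : ℝ → ℝ}

theorem sn_sq_add_cn_sq (h : JacobiODE k sn cn dn) (z : ℝ) : sn z ^ 2 + cn z ^ 2 = 1 := by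
  have hd (x : ℝ) : HasDerivAt (fun z => sn z ^ 2 + cn z ^ 2) 0 x :=
    (((h.hasDerivAt_sn x).fun_pow 2).fun_add ((h.hasDerivAt_cn x).fun_pow 2)).congr_deriv
      (by push_cast; ring)
  have := is_const_of_deriv_eq_zero (fun x => (hd x).differentiableAt) (fun x => (hd x).deriv) z 0
  simpa [h.sn_zero, h.cn_zero] using this

theorem dn_sq_add_sq_mul_sn_sq (h : JacobiODE k sn cn dn) (z : ℝ) :
    dn z ^ 2 + k ^ 2 * sn z ^ 2 = 1 := by
  have hd (x : ℝ) : HasDerivAt (fun z => dn z ^ 2 + k ^ 2 * sn z ^ 2) 0 x :=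
    (((h.hasDerivAt_dn x).fun_pow 2).fun_add
      (((h.hasDerivAt_sn x).fun_pow 2).const_mul (k ^ 2))).congr_deriv (by push_cast; ring)
  have := is_const_of_deriv_eq_zero (fun x => (hd x).differentiableAt) (fun x => (hd x).deriv) z 0
  simpa [h.sn_zero, h.dn_zero] using this

theorem hasDerivAt_integral_dn_sq (h : JacobiODE k sn cn dn) (z : ℝ) :
    HasDerivAt (fun t => ∫ y in (0:ℝ)..t, dn y ^ 2) (dn z ^ 2) z := by
  have hc : Continuous fun y => dn y ^ 2 :=
    (continuous_iff_continuousAt.2 fun y => (h.hasDerivAt_dn y).continuousAt).pow 2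
  exact intervalIntegral.integral_hasDerivAt_right (hc.intervalIntegrable _ _)
    (hc.stronglyMeasurableAtFilter _ _) hc.continuousAt

theorem hasDerivAt_const_mul_sn_mul_cn (h : JacobiODE k sn cn dn) (c z : ℝ) :
    HasDerivAt (fun z => c * sn z * cn z) (c * (dn z * (cn z ^ 2 - sn z ^ 2))) z :=
  (((h.hasDerivAt_sn z).const_mul c).fun_mul (h.hasDerivAt_cn z)).congr_deriv (by ring)

theorem hasDerivAt_dn_mul_cn_sq_sub_sn_sq (h : JacobiODE k sn cn dn) (z : ℝ) :
    HasDerivAt (fun z => dn z * (cn z ^ 2 - sn z ^ 2))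
      (-(k ^ 2 * sn z * cn z * (cn z ^ 2 - sn z ^ 2)) - 4 * sn z * cn z * dn z ^ 2) z :=
  ((h.hasDerivAt_dn z).fun_mul (((h.hasDerivAt_cn z).fun_pow 2).fun_sub
    ((h.hasDerivAt_sn z).fun_pow 2))).congr_deriv (by push_cast; ring)

theorem Lp_const_mul_sn_mul_cn (h : JacobiODE k sn cn dn) (c z : ℝ) :
    Lp k dn (fun z => c * sn z * cn z) z = 0 := by
  rw [_root_.Lp, deriv_deriv_eq_of_hasDerivAt (h.hasDerivAt_const_mul_sn_mul_cn c)
    fun x => (h.hasDerivAt_dn_mul_cn_sq_sub_sn_sq x).const_mul c]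
  linear_combination (c * k ^ 2 * sn z * cn z) * h.sn_sq_add_cn_sq z
    - (2 * c * sn z * cn z) * h.dn_sq_add_sq_mul_sn_sq z

theorem Lm_eq_const_mul_sn_mul_cn (h : JacobiODE k sn cn dn) (a b z : ℝ) :
    Lm k dn (fun z => (a * (∫ y in (0:ℝ)..z, dn y ^ 2) - b * z) * dn z - k ^ 2 * a * sn z * cn z) z
      = -2 * k ^ 2 * b * sn z * cn z := by
  set u : ℝ → ℝ := fun z => a * (∫ y in (0:ℝ)..z, dn y ^ 2) - b * z
  have hu (x : ℝ) : HasDerivAt u (a * dn x ^ 2 - b) x :=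
    (((h.hasDerivAt_integral_dn_sq x).const_mul a).sub ((hasDerivAt_id x).const_mul b)).congr_deriv
      (by simp)
  have hf (x : ℝ) : HasDerivAt (fun z => u z * dn z - k ^ 2 * a * sn z * cn z)
      ((a * dn x ^ 2 - b) * dn x - u x * (k ^ 2 * sn x * cn x)
        - k ^ 2 * a * (dn x * (cn x ^ 2 - sn x ^ 2))) x :=
    (((hu x).fun_mul (h.hasDerivAt_dn x)).fun_sub
      (h.hasDerivAt_const_mul_sn_mul_cn (k ^ 2 * a) x)).congr_deriv (by ring)
  have hf' (x : ℝ) :=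
    ((((((h.hasDerivAt_dn x).fun_pow 2).const_mul a).sub_const b).fun_mul (h.hasDerivAt_dn x)).fun_sub
      ((hu x).fun_mul (h.hasDerivAt_const_mul_sn_mul_cn (k ^ 2) x))).fun_sub
      ((h.hasDerivAt_dn_mul_cn_sq_sub_sn_sq x).const_mul (k ^ 2 * a))
  rw [Lm, deriv_deriv_eq_of_hasDerivAt hf hf']
  linear_combination (u z * dn z * k ^ 2 - a * sn z * cn z * k ^ 4) * h.sn_sq_add_cn_sq z
    + (-2 * u z * dn z + 2 * k ^ 2 * a * sn z * cn z) * h.dn_sq_add_sq_mul_sn_sq z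

end JacobiODE

theorem stmt_3_general (k : ℝ)
    (sn cn dn : ℝ → ℝ)
    (hsn0 : sn 0 = 0) (hcn0 : cn 0 = 1) (hdn0 : dn 0 = 1)
    (hsn' : ∀ z, HasDerivAt sn (cn z * dn z) z)
    (hcn' : ∀ z, HasDerivAt cn (-(sn z * dn z)) z)
    (hdn' : ∀ z, HasDerivAt dn (-(k ^ 2 * sn z * cn z)) z)
    (φ : ℝ → ℝ)
    (hφ : ∀ z, φ z = (ellipticK k * (∫ y in (0:ℝ)..z, dn y ^ 2) - ellipticE k * z) * dn z
      - k ^ 2 * ellipticK k * sn z * cn z) :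
    (∀ z, Lm k dn φ z = -2 * k ^ 2 * ellipticE k * sn z * cn z) ∧
    (∀ z, Lp k dn (Lm k dn φ) z = 0) := by
  have h : JacobiODE k sn cn dn := ⟨hsn0, hcn0, hdn0, hsn', hcn', hdn'⟩
  obtain rfl : φ = _ := funext hφ
  have hLm (z : ℝ) := h.Lm_eq_const_mul_sn_mul_cn (ellipticK k) (ellipticE k) z
  refine ⟨hLm, fun z => ?_⟩
  rw [show Lm k dn _ = fun z => -2 * k ^ 2 * ellipticE k * sn z * cn z from funext hLm]
  exact h.Lp_const_mul_sn_mul_cn _ z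

/-- with φ(z) = (K·E(z,k) − E·z)·dn z − k²·K·sn z·cn z, one has
L₋[φ] = −2k²E·sn z·cn z and hence L₊L₋[φ] = 0. -/
theorem stmt_3 (k : ℝ) (hk0 : 0 < k) (hk1 : k < 1)
    (sn cn dn : ℝ → ℝ)
    (hsn0 : sn 0 = 0) (hcn0 : cn 0 = 1) (hdn0 : dn 0 = 1)
    (hsn' : ∀ z, HasDerivAt sn (cn z * dn z) z)
    (hcn' : ∀ z, HasDerivAt cn (-(sn z * dn z)) z)
    (hdn' : ∀ z, HasDerivAt dn (-(k ^ 2 * sn z * cn z)) z)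
    (φ : ℝ → ℝ)
    (hφ : ∀ z, φ z = (ellipticK k * (∫ y in (0:ℝ)..z, dn y ^ 2) - ellipticE k * z) * dn z
      - k ^ 2 * ellipticK k * sn z * cn z) :
    (∀ z, Lm k dn φ z = -2 * k ^ 2 * ellipticE k * sn z * cn z) ∧
    (∀ z, Lp k dn (Lm k dn φ) z = 0) :=
  stmt_3_general k sn cn dn hsn0 hcn0 hdn0 hsn' hcn' hdn' φ hφ
end

section
/- For k ∈ (0,1), E(k)² + (k²−1)·K(k)² > 0, where K and E are the complete elliptic integrals of the first and second kind respectively. -/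
open MeasureTheory

/-- E(k)² + (k²−1)·K(k)² > 0 for k ∈ (0,1). -/
theorem stmt_6 (k : ℝ) (hk0 : 0 < k) (hk1 : k < 1) :
    0 < ellipticE k ^ 2 + (k ^ 2 - 1) * ellipticK k ^ 2 := by
  have hk2 : (0:ℝ) < 1 - k ^ 2 := by nlinarith
  set c : ℝ := Real.sqrt (1 - k ^ 2) with hc
  have hcpos : 0 < c := Real.sqrt_pos.mpr hk2
  have hcsq : c ^ 2 = 1 - k ^ 2 := Real.sq_sqrt hk2.le
  -- the basic quantity is always positive
  have hbase : ∀ θ : ℝ, 0 < 1 - k ^ 2 * Real.sin θ ^ 2 := by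
    intro θ
    nlinarith [Real.sin_sq_le_one θ, Real.neg_one_le_sin θ, Real.sin_le_one θ,
      sq_nonneg (Real.sin θ)]
  have hsqrtpos : ∀ θ : ℝ, 0 < Real.sqrt (1 - k ^ 2 * Real.sin θ ^ 2) := fun θ =>
    Real.sqrt_pos.mpr (hbase θ)
  -- continuity
  have hcontS : Continuous fun θ : ℝ => Real.sqrt (1 - k ^ 2 * Real.sin θ ^ 2) := by
    apply Real.continuous_sqrt.comp
    continuity
  have hcontI : Continuous fun θ : ℝ => 1 / Real.sqrt (1 - k ^ 2 * Real.sin θ ^ 2) := by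
    apply continuous_const.div hcontS
    intro θ; exact (hsqrtpos θ).ne'
  have hpi : (0:ℝ) < Real.pi / 2 := by positivity
  -- K > 0
  have hKpos : 0 < ellipticK k := by
    apply intervalIntegral.intervalIntegral_pos_of_pos_on
      (hcontI.intervalIntegrable 0 (Real.pi / 2))
    · intro x _
      exact one_div_pos.mpr (hsqrtpos x)
    · exact hpi
  -- define g and h
  set g : ℝ → ℝ := fun θ =>
    Real.sqrt (1 - k ^ 2 * Real.sin θ ^ 2) -
      c / Real.sqrt (1 - k ^ 2 * Real.sin θ ^ 2) with hg
  have hcontg : Continuous g := by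
    apply hcontS.sub
    apply continuous_const.div hcontS
    intro θ; exact (hsqrtpos θ).ne'
  -- ∫ g = E - c * K
  have hint : ∫ θ in (0:ℝ)..(Real.pi / 2), g θ = ellipticE k - c * ellipticK k := by
    rw [hg]
    have h1 : (Continuous fun θ : ℝ => Real.sqrt (1 - k ^ 2 * Real.sin θ ^ 2)) := hcontS
    have h2 : (Continuous fun θ : ℝ => c / Real.sqrt (1 - k ^ 2 * Real.sin θ ^ 2)) := by
      apply continuous_const.div hcontS
      intro θ; exact (hsqrtpos θ).ne'
    rw [intervalIntegral.integral_sub (h1.intervalIntegrable _ _) (h2.intervalIntegrable _ _)]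
    have : ∀ θ : ℝ, c / Real.sqrt (1 - k ^ 2 * Real.sin θ ^ 2) =
        c * (1 / Real.sqrt (1 - k ^ 2 * Real.sin θ ^ 2)) := by
      intro θ; ring
    simp_rw [this]
    rw [intervalIntegral.integral_const_mul]
    rfl
  -- symmetrization: ∫ g(π/2 - θ) = ∫ g
  have hsym : ∫ θ in (0:ℝ)..(Real.pi / 2), g (Real.pi / 2 - θ) =
      ∫ θ in (0:ℝ)..(Real.pi / 2), g θ := by
    have h := intervalIntegral.integral_comp_sub_left (a := (0:ℝ)) (b := Real.pi / 2) g
      (Real.pi / 2)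
    rw [h]
    norm_num
  -- the symmetrized integrand is positive on (0, π/2)
  have hposon : ∀ θ ∈ Set.Ioo (0:ℝ) (Real.pi / 2), 0 < g θ + g (Real.pi / 2 - θ) := by
    intro θ hθ
    obtain ⟨hθ1, hθ2⟩ := hθ
    have hs0 : 0 < Real.sin θ := Real.sin_pos_of_pos_of_lt_pi hθ1 (by linarith [Real.pi_pos])
    have hc0 : 0 < Real.cos θ := Real.cos_pos_of_mem_Ioo ⟨by linarith [Real.pi_pos], hθ2⟩
    set x : ℝ := Real.sqrt (1 - k ^ 2 * Real.sin θ ^ 2) with hx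
    set y : ℝ := Real.sqrt (1 - k ^ 2 * Real.sin (Real.pi / 2 - θ) ^ 2) with hy
    have hxpos : 0 < x := hsqrtpos θ
    have hypos : 0 < y := hsqrtpos _
    have hxsq : x ^ 2 = 1 - k ^ 2 * Real.sin θ ^ 2 := Real.sq_sqrt (hbase θ).le
    have hbcos : 0 < 1 - k ^ 2 * Real.cos θ ^ 2 := by
      have := hbase (Real.pi / 2 - θ)
      rwa [Real.sin_pi_div_two_sub] at this
    have hysq : y ^ 2 = 1 - k ^ 2 * Real.cos θ ^ 2 := by
      rw [hy, Real.sin_pi_div_two_sub]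
      exact Real.sq_sqrt hbcos.le
    -- x * y > c
    have hxy : c < x * y := by
      have hab : 1 - k ^ 2 < (1 - k ^ 2 * Real.sin θ ^ 2) * (1 - k ^ 2 * Real.cos θ ^ 2) := by
        have hpyth := Real.sin_sq_add_cos_sq θ
        have hkey : (1 - k ^ 2 * Real.sin θ ^ 2) * (1 - k ^ 2 * Real.cos θ ^ 2) =
            1 - k ^ 2 + k ^ 4 * (Real.sin θ * Real.cos θ) ^ 2 := by
          linear_combination (-(k ^ 2) + k ^ 4 * Real.sin θ ^ 2 * Real.cos θ ^ 2 * 0) * hpyth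
        have h4 : 0 < k ^ 4 * (Real.sin θ * Real.cos θ) ^ 2 := by positivity
        linarith
      have : c < Real.sqrt ((1 - k ^ 2 * Real.sin θ ^ 2) * (1 - k ^ 2 * Real.cos θ ^ 2)) :=
        Real.sqrt_lt_sqrt hk2.le hab
      calc c < Real.sqrt ((1 - k ^ 2 * Real.sin θ ^ 2) * (1 - k ^ 2 * Real.cos θ ^ 2)) := this
        _ = x * y := by
            rw [Real.sqrt_mul (hbase θ).le, hx, hy, Real.sin_pi_div_two_sub]
    have h1 : c / x < y := (div_lt_iff₀ hxpos).mpr (by nlinarith)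
    have h2 : c / y < x := (div_lt_iff₀ hypos).mpr (by nlinarith)
    have hgθ : g θ = x - c / x := rfl
    have hgθ' : g (Real.pi / 2 - θ) = y - c / y := rfl
    rw [hgθ, hgθ']
    linarith
  -- conclude 0 < ∫ (g θ + g (π/2 - θ))
  have hcg2 : Continuous fun θ : ℝ => g (Real.pi / 2 - θ) :=
    hcontg.comp (continuous_const.sub continuous_id)
  have hcont2 : Continuous fun θ : ℝ => g θ + g (Real.pi / 2 - θ) := hcontg.add hcg2
  have hsumpos : 0 < ∫ θ in (0:ℝ)..(Real.pi / 2), (g θ + g (Real.pi / 2 - θ)) :=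
    intervalIntegral.intervalIntegral_pos_of_pos_on
      (hcont2.intervalIntegrable 0 (Real.pi / 2)) hposon hpi
  have hsplit : ∫ θ in (0:ℝ)..(Real.pi / 2), (g θ + g (Real.pi / 2 - θ)) =
      2 * (ellipticE k - c * ellipticK k) := by
    rw [intervalIntegral.integral_add (hcontg.intervalIntegrable _ _)
      (hcg2.intervalIntegrable _ _), hsym, hint]
    ring
  rw [hsplit] at hsumpos
  have hEK : c * ellipticK k < ellipticE k := by linarith
  nlinarith [mul_pos hcpos hKpos]
end

section
/- For k ∈ (0,1), ⟨φ̃, dn⟩ := ∫_{−K}^{K} [k²·sn z·cn z·(K·E(z,k) − E·z) + (E−K)·dn z + k²·K·cn²z·dn z]·dn z dz = E² + (k²−1)K². In particular this integral is strictly positive, so the inhomogeneous equation L₋f = φ̃ has no periodic solution. -/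
/-!
Writing `sn = sin am`, `cn = cos am`, `dn = √(1 − k² sin² am)` with `am' = dn`, one gets
`F(am z) = z` and `∫₀ᶻ dn² = E(am z)` for the incomplete elliptic integrals, hence
`am (±K) = ±π/2` and `∫₀^{±K} dn² = ±E`. The integrand `φ̃ dn` has an explicit primitive, whose
values at `±K` give `E² − k'²K²` with `k' = √(1 − k²)`. This is positive because
`∫₀ᴷ (dn − k'/dn)² = 2 (E − k'K)`, the integrand having the primitive
`2 ∫₀ᶻ dn² − 2k'z − k² sn cn / dn`. Finally `L₋ dn = 0` and the Lagrange identity give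
`∫_{-K}^{K} (L₋ f) dn = 0` for every `2K`-periodic `f`, so `L₋ f = φ̃` is impossible.
-/

open MeasureTheory

open Real

theorem eq_of_forall_hasDerivAt_zero {g : ℝ → ℝ} (h : ∀ x, HasDerivAt g 0 x) (x y : ℝ) :
    g x = g y :=
  is_const_of_deriv_eq_zero (fun z => (h z).differentiableAt) (fun z => (h z).deriv) x y

theorem Function.Periodic.deriv {f : ℝ → ℝ} {c : ℝ} (hf : Function.Periodic f c) :
    Function.Periodic (deriv f) c := fun x => by
  rw [← deriv_comp_add_const, show (fun y => f (y + c)) = f from funext hf]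

theorem Function.Even.integral_zero_neg {g : ℝ → ℝ} (hg : Function.Even g) (x : ℝ) :
    ∫ t in (0:ℝ)..-x, g t = -∫ t in (0:ℝ)..x, g t := by
  rw [intervalIntegral.integral_symm, ← neg_zero, ← intervalIntegral.integral_comp_neg,
    neg_zero]
  exact congrArg Neg.neg (intervalIntegral.integral_congr fun t _ => hg t)

theorem integral_deriv_mul_sub_mul_deriv {f f' f'' g g' g'' : ℝ → ℝ} {a b : ℝ}
    (hf : ∀ x, HasDerivAt f (f' x) x) (hf' : ∀ x, HasDerivAt f' (f'' x) x)
    (hg : ∀ x, HasDerivAt g (g' x) x) (hg' : ∀ x, HasDerivAt g' (g'' x) x)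
    (hint : IntervalIntegrable (fun x => f'' x * g x - f x * g'' x) volume a b) :
    ∫ x in a..b, (f'' x * g x - f x * g'' x)
      = (f' b * g b - f b * g' b) - (f' a * g a - f a * g' a) := by
  refine intervalIntegral.integral_eq_sub_of_hasDerivAt
    (f := fun x => f' x * g x - f x * g' x) (fun x _ => ?_) hint
  exact (((hf' x).mul (hg x)).sub ((hf x).mul (hg' x))).congr_deriv (by ring)

section IncompleteElliptic

variable {k : ℝ}

noncomputable def incompleteEllipticF (k φ : ℝ) : ℝ :=
  ∫ θ in (0:ℝ)..φ, 1 / sqrt (1 - k ^ 2 * sin θ ^ 2)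

noncomputable def incompleteEllipticE (k φ : ℝ) : ℝ :=
  ∫ θ in (0:ℝ)..φ, sqrt (1 - k ^ 2 * sin θ ^ 2)

@[simp] theorem incompleteEllipticF_zero : incompleteEllipticF k 0 = 0 :=
  intervalIntegral.integral_same

@[simp] theorem incompleteEllipticE_zero : incompleteEllipticE k 0 = 0 :=
  intervalIntegral.integral_same

theorem one_sub_sq_mul_sin_sq_pos (hk : k ^ 2 < 1) (θ : ℝ) : 0 < 1 - k ^ 2 * sin θ ^ 2 := by
  nlinarith [sin_sq_le_one θ, sq_nonneg (sin θ), sq_nonneg k]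

theorem hasDerivAt_incompleteEllipticF (hk : k ^ 2 < 1) (φ : ℝ) :
    HasDerivAt (incompleteEllipticF k) (1 / sqrt (1 - k ^ 2 * sin φ ^ 2)) φ :=
  ((continuous_const.div (by fun_prop) fun θ =>
    (sqrt_pos.2 (one_sub_sq_mul_sin_sq_pos hk θ)).ne').integral_hasStrictDerivAt 0 φ).hasDerivAt

theorem hasDerivAt_incompleteEllipticE (φ : ℝ) :
    HasDerivAt (incompleteEllipticE k) (sqrt (1 - k ^ 2 * sin φ ^ 2)) φ :=
  ((by fun_prop : Continuous fun θ => sqrt (1 - k ^ 2 * sin θ ^ 2)).integral_hasStrictDerivAt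
    0 φ).hasDerivAt

theorem strictMono_incompleteEllipticF (hk : k ^ 2 < 1) : StrictMono (incompleteEllipticF k) :=
  strictMono_of_deriv_pos fun φ => by
    rw [(hasDerivAt_incompleteEllipticF hk φ).deriv]
    exact one_div_pos.2 (sqrt_pos.2 (one_sub_sq_mul_sin_sq_pos hk φ))

theorem incompleteEllipticF_neg (φ : ℝ) :
    incompleteEllipticF k (-φ) = -incompleteEllipticF k φ :=
  Function.Even.integral_zero_neg (fun θ => by rw [sin_neg, neg_sq]) φ

theorem incompleteEllipticE_neg (φ : ℝ) :
    incompleteEllipticE k (-φ) = -incompleteEllipticE k φ :=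
  Function.Even.integral_zero_neg (fun θ => by rw [sin_neg, neg_sq]) φ

theorem ellipticK_pos (hk : k ^ 2 < 1) : 0 < ellipticK k := by
  have h := strictMono_incompleteEllipticF hk (by positivity : (0:ℝ) < π / 2)
  rwa [incompleteEllipticF_zero] at h

end IncompleteElliptic

structure JacobiSystem (k : ℝ) (sn cn dn : ℝ → ℝ) : Prop where
  sn_zero : sn 0 = 0
  cn_zero : cn 0 = 1
  dn_zero : dn 0 = 1
  hasDerivAt_sn : ∀ z, HasDerivAt sn (cn z * dn z) z
  hasDerivAt_cn : ∀ z, HasDerivAt cn (-(sn z * dn z)) z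
  hasDerivAt_dn : ∀ z, HasDerivAt dn (-(k ^ 2 * sn z * cn z)) z

noncomputable def amplitude (dn : ℝ → ℝ) (z : ℝ) : ℝ := ∫ y in (0:ℝ)..z, dn y

noncomputable def phiTilde (k : ℝ) (sn cn dn : ℝ → ℝ) (z : ℝ) : ℝ :=
  k ^ 2 * sn z * cn z * (ellipticK k * (∫ y in (0:ℝ)..z, dn y ^ 2) - ellipticE k * z)
    + (ellipticE k - ellipticK k) * dn z + k ^ 2 * ellipticK k * cn z ^ 2 * dn z

@[simp] theorem amplitude_zero (dn : ℝ → ℝ) : amplitude dn 0 = 0 :=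
  intervalIntegral.integral_same

namespace JacobiSystem

variable {k : ℝ} {sn cn dn : ℝ → ℝ}

theorem continuous_sn (h : JacobiSystem k sn cn dn) : Continuous sn :=
  continuous_iff_continuousAt.2 fun z => (h.hasDerivAt_sn z).continuousAt

theorem continuous_cn (h : JacobiSystem k sn cn dn) : Continuous cn :=
  continuous_iff_continuousAt.2 fun z => (h.hasDerivAt_cn z).continuousAt

theorem continuous_dn (h : JacobiSystem k sn cn dn) : Continuous dn :=
  continuous_iff_continuousAt.2 fun z => (h.hasDerivAt_dn z).continuousAt

theorem sn_sq_add_cn_sq (h : JacobiSystem k sn cn dn) (z : ℝ) : sn z ^ 2 + cn z ^ 2 = 1 := by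
  have hconst := eq_of_forall_hasDerivAt_zero (g := fun w => sn w ^ 2 + cn w ^ 2) (fun x =>
    (((h.hasDerivAt_sn x).pow 2).add ((h.hasDerivAt_cn x).pow 2)).congr_deriv (by ring)) z 0
  simpa [h.sn_zero, h.cn_zero] using hconst

theorem dn_sq (h : JacobiSystem k sn cn dn) (z : ℝ) : dn z ^ 2 = 1 - k ^ 2 * sn z ^ 2 := by
  have hconst := eq_of_forall_hasDerivAt_zero (g := fun w => k ^ 2 * sn w ^ 2 + dn w ^ 2)
    (fun x => ((((h.hasDerivAt_sn x).pow 2).const_mul (k ^ 2)).add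
      ((h.hasDerivAt_dn x).pow 2)).congr_deriv (by ring)) z 0
  simp only [h.sn_zero, h.dn_zero] at hconst
  linarith

theorem dn_pos (h : JacobiSystem k sn cn dn) (hk : k ^ 2 < 1) (z : ℝ) : 0 < dn z := by
  have hne : ∀ x, dn x ≠ 0 := fun x hx => by
    nlinarith [h.dn_sq x, h.sn_sq_add_cn_sq x, sq_nonneg (cn x), sq_nonneg k]
  by_contra! hle
  obtain ⟨c, -, hc⟩ := intermediate_value_uIcc (a := z) (b := 0) h.continuous_dn.continuousOn
    (Set.mem_uIcc.2 (Or.inl ⟨hle, h.dn_zero ▸ zero_le_one⟩))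
  exact hne c hc

theorem dn_eq_sqrt (h : JacobiSystem k sn cn dn) (hk : k ^ 2 < 1) (z : ℝ) :
    dn z = sqrt (1 - k ^ 2 * sn z ^ 2) := by
  rw [← h.dn_sq, sqrt_sq (h.dn_pos hk z).le]

theorem hasDerivAt_amplitude (h : JacobiSystem k sn cn dn) (z : ℝ) :
    HasDerivAt (amplitude dn) (dn z) z :=
  (h.continuous_dn.integral_hasStrictDerivAt 0 z).hasDerivAt

theorem hasDerivAt_integral_dn_sq (h : JacobiSystem k sn cn dn) (z : ℝ) :
    HasDerivAt (fun w => ∫ y in (0:ℝ)..w, dn y ^ 2) (dn z ^ 2) z :=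
  ((h.continuous_dn.pow 2).integral_hasStrictDerivAt 0 z).hasDerivAt

/-- Only the sum of the two squared distances has vanishing derivative. -/
theorem sn_eq_sin_amplitude_and_cn_eq_cos_amplitude (h : JacobiSystem k sn cn dn) (z : ℝ) :
    sn z = sin (amplitude dn z) ∧ cn z = cos (amplitude dn z) := by
  set am := amplitude dn
  have hdist := eq_of_forall_hasDerivAt_zero
    (g := fun w => (sn w - sin (am w)) ^ 2 + (cn w - cos (am w)) ^ 2) (fun x =>
      ((((h.hasDerivAt_sn x).sub ((hasDerivAt_sin _).comp x (h.hasDerivAt_amplitude x))).pow 2).add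
        (((h.hasDerivAt_cn x).sub ((hasDerivAt_cos _).comp x (h.hasDerivAt_amplitude x))).pow 2)
        ).congr_deriv (by simp only [Pi.sub_apply, Function.comp_apply]; ring)) z 0
  simp only [am, amplitude_zero, h.sn_zero, h.cn_zero, sin_zero, cos_zero, sub_self] at hdist
  constructor <;> nlinarith [sq_nonneg (sn z - sin (am z)), sq_nonneg (cn z - cos (am z))]

theorem sn_eq_sin_amplitude (h : JacobiSystem k sn cn dn) (z : ℝ) : sn z = sin (amplitude dn z) :=
  (h.sn_eq_sin_amplitude_and_cn_eq_cos_amplitude z).1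

theorem cn_eq_cos_amplitude (h : JacobiSystem k sn cn dn) (z : ℝ) : cn z = cos (amplitude dn z) :=
  (h.sn_eq_sin_amplitude_and_cn_eq_cos_amplitude z).2

theorem incompleteEllipticF_amplitude (h : JacobiSystem k sn cn dn) (hk : k ^ 2 < 1) (z : ℝ) :
    incompleteEllipticF k (amplitude dn z) = z := by
  have hconst := eq_of_forall_hasDerivAt_zero
    (g := fun w => incompleteEllipticF k (amplitude dn w) - w) (fun x => by
      refine (((hasDerivAt_incompleteEllipticF hk _).comp x (h.hasDerivAt_amplitude x)).sub
        (hasDerivAt_id x)).congr_deriv ?_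
      rw [← h.sn_eq_sin_amplitude, ← h.dn_eq_sqrt hk, one_div_mul_cancel (h.dn_pos hk x).ne',
        sub_self]) z 0
  simp only [amplitude_zero, incompleteEllipticF_zero, sub_zero] at hconst
  linarith

theorem amplitude_ellipticK (h : JacobiSystem k sn cn dn) (hk : k ^ 2 < 1) :
    amplitude dn (ellipticK k) = π / 2 :=
  (strictMono_incompleteEllipticF hk).injective (h.incompleteEllipticF_amplitude hk _)

theorem amplitude_neg_ellipticK (h : JacobiSystem k sn cn dn) (hk : k ^ 2 < 1) :
    amplitude dn (-ellipticK k) = -(π / 2) :=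
  (strictMono_incompleteEllipticF hk).injective <| by
    rw [h.incompleteEllipticF_amplitude hk, incompleteEllipticF_neg]; rfl

theorem integral_dn_sq_eq (h : JacobiSystem k sn cn dn) (hk : k ^ 2 < 1) (z : ℝ) :
    ∫ y in (0:ℝ)..z, dn y ^ 2 = incompleteEllipticE k (amplitude dn z) := by
  have hconst := eq_of_forall_hasDerivAt_zero
    (g := fun w => incompleteEllipticE k (amplitude dn w) - ∫ y in (0:ℝ)..w, dn y ^ 2)
    (fun x => by
      refine (((hasDerivAt_incompleteEllipticE _).comp x (h.hasDerivAt_amplitude x)).sub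
        (h.hasDerivAt_integral_dn_sq x)).congr_deriv ?_
      rw [← h.sn_eq_sin_amplitude, ← h.dn_eq_sqrt hk]
      ring) z 0
  simp only [amplitude_zero, incompleteEllipticE_zero, intervalIntegral.integral_same,
    sub_zero] at hconst
  linarith

theorem integral_dn_sq_ellipticK (h : JacobiSystem k sn cn dn) (hk : k ^ 2 < 1) :
    ∫ y in (0:ℝ)..ellipticK k, dn y ^ 2 = ellipticE k := by
  rw [h.integral_dn_sq_eq hk, h.amplitude_ellipticK hk]; rfl

theorem integral_dn_sq_neg_ellipticK (h : JacobiSystem k sn cn dn) (hk : k ^ 2 < 1) :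
    ∫ y in (0:ℝ)..-ellipticK k, dn y ^ 2 = -ellipticE k := by
  rw [h.integral_dn_sq_eq hk, h.amplitude_neg_ellipticK hk, incompleteEllipticE_neg]; rfl

theorem sn_ellipticK (h : JacobiSystem k sn cn dn) (hk : k ^ 2 < 1) : sn (ellipticK k) = 1 := by
  rw [h.sn_eq_sin_amplitude, h.amplitude_ellipticK hk, sin_pi_div_two]

theorem cn_ellipticK (h : JacobiSystem k sn cn dn) (hk : k ^ 2 < 1) : cn (ellipticK k) = 0 := by
  rw [h.cn_eq_cos_amplitude, h.amplitude_ellipticK hk, cos_pi_div_two]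

theorem sn_neg_ellipticK (h : JacobiSystem k sn cn dn) (hk : k ^ 2 < 1) :
    sn (-ellipticK k) = -1 := by
  rw [h.sn_eq_sin_amplitude, h.amplitude_neg_ellipticK hk, sin_neg, sin_pi_div_two]

theorem cn_neg_ellipticK (h : JacobiSystem k sn cn dn) (hk : k ^ 2 < 1) :
    cn (-ellipticK k) = 0 := by
  rw [h.cn_eq_cos_amplitude, h.amplitude_neg_ellipticK hk, cos_neg, cos_pi_div_two]

theorem dn_neg_ellipticK (h : JacobiSystem k sn cn dn) (hk : k ^ 2 < 1) :
    dn (-ellipticK k) = dn (ellipticK k) := by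
  rw [h.dn_eq_sqrt hk, h.dn_eq_sqrt hk, h.sn_ellipticK hk, h.sn_neg_ellipticK hk, neg_one_sq,
    one_pow]

theorem deriv_dn (h : JacobiSystem k sn cn dn) : deriv dn = fun z => -(k ^ 2 * sn z * cn z) :=
  funext fun z => (h.hasDerivAt_dn z).deriv

/-- `dn` lies in the kernel of `L₋`. -/
theorem hasDerivAt_deriv_dn (h : JacobiSystem k sn cn dn) (z : ℝ) :
    HasDerivAt (deriv dn) (-(2 * dn z ^ 2 + k ^ 2 - 2) * dn z) z := by
  rw [h.deriv_dn]
  refine ((((h.hasDerivAt_sn z).const_mul (k ^ 2)).mul (h.hasDerivAt_cn z)).neg).congr_deriv ?_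
  linear_combination (-(k ^ 2) * dn z) * h.sn_sq_add_cn_sq z + (2 * dn z) * h.dn_sq z

theorem integral_Lm_mul_dn_eq_zero (h : JacobiSystem k sn cn dn) (hk : k ^ 2 < 1) {f : ℝ → ℝ}
    (hf : ContDiff ℝ 2 f) (hper : Function.Periodic f (2 * ellipticK k)) :
    ∫ z in (-ellipticK k)..ellipticK k, Lm k dn f z * dn z = 0 := by
  have hf' : ContDiff ℝ 1 (deriv f) := (contDiff_succ_iff_deriv.mp hf).2.2
  have hdn' : ∀ z, deriv dn z = -(k ^ 2 * sn z * cn z) := fun z => congrFun h.deriv_dn z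
  have hlagrange := integral_deriv_mul_sub_mul_deriv (a := -ellipticK k) (b := ellipticK k)
    (fun x => (hf.differentiable two_ne_zero x).hasDerivAt)
    (fun x => (hf'.differentiable one_ne_zero x).hasDerivAt)
    (fun x => (h.hasDerivAt_dn x).differentiableAt.hasDerivAt) h.hasDerivAt_deriv_dn
    (Continuous.intervalIntegrable (by
      have := hf'.continuous_deriv le_rfl
      have := hf.continuous
      have := h.continuous_dn
      fun_prop) _ _)
  have hderiv_per : deriv f (ellipticK k) = deriv f (-ellipticK k) := by
    simpa only [neg_add_cancel_left, two_mul] using hper.deriv (-ellipticK k)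
  rw [hdn', hdn', h.cn_ellipticK hk, h.cn_neg_ellipticK hk, h.dn_neg_ellipticK hk,
    hderiv_per] at hlagrange
  calc ∫ z in (-ellipticK k)..ellipticK k, Lm k dn f z * dn z
      = -∫ z in (-ellipticK k)..ellipticK k,
          (deriv (deriv f) z * dn z - f z * (-(2 * dn z ^ 2 + k ^ 2 - 2) * dn z)) := by
        rw [← intervalIntegral.integral_neg]
        congr 1 with z
        simp only [Lm]
        ring
    _ = 0 := by
        rw [hlagrange]
        ring

theorem continuous_sq_dn_sub_div_dn (h : JacobiSystem k sn cn dn) (hk : k ^ 2 < 1) (c : ℝ) :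
    Continuous fun z => (dn z - c / dn z) ^ 2 :=
  (h.continuous_dn.sub (continuous_const.div h.continuous_dn fun z => (h.dn_pos hk z).ne')).pow 2

theorem integral_sq_dn_sub_div_dn (h : JacobiSystem k sn cn dn) (hk : k ^ 2 < 1) :
    ∫ z in (0:ℝ)..ellipticK k, (dn z - sqrt (1 - k ^ 2) / dn z) ^ 2
      = 2 * (ellipticE k - sqrt (1 - k ^ 2) * ellipticK k) := by
  have hsq : sqrt (1 - k ^ 2) ^ 2 = 1 - k ^ 2 := sq_sqrt (by linarith)
  have hprim : ∀ z, HasDerivAt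
      (fun w => 2 * (∫ y in (0:ℝ)..w, dn y ^ 2) - 2 * sqrt (1 - k ^ 2) * w
        - k ^ 2 * (sn w * cn w / dn w))
      ((dn z - sqrt (1 - k ^ 2) / dn z) ^ 2) z := fun z => by
    have hdn := (h.dn_pos hk z).ne'
    refine ((((h.hasDerivAt_integral_dn_sq z).const_mul 2).sub
      ((hasDerivAt_id z).const_mul _)).sub
      ((((h.hasDerivAt_sn z).mul (h.hasDerivAt_cn z)).div (h.hasDerivAt_dn z) hdn).const_mul
        (k ^ 2))).congr_deriv ?_
    simp only [Pi.mul_apply]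
    field_simp
    linear_combination (-(k ^ 2) * dn z ^ 2 - k ^ 4 * sn z ^ 2) * h.sn_sq_add_cn_sq z
      + (dn z ^ 2 + 1 - k ^ 2 + k ^ 2 * sn z ^ 2) * h.dn_sq z - hsq
  rw [intervalIntegral.integral_eq_sub_of_hasDerivAt (fun z _ => hprim z)
    ((h.continuous_sq_dn_sub_div_dn hk _).intervalIntegrable _ _), h.integral_dn_sq_ellipticK hk,
    h.cn_ellipticK hk, h.sn_zero]
  simp only [mul_zero, zero_div, sub_zero, intervalIntegral.integral_same, sub_self, zero_mul]
  ring

theorem sqrt_one_sub_sq_mul_ellipticK_lt_ellipticE (h : JacobiSystem k sn cn dn) (hk₀ : k ≠ 0)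
    (hk : k ^ 2 < 1) : sqrt (1 - k ^ 2) * ellipticK k < ellipticE k := by
  have hsqrt : sqrt (1 - k ^ 2) < 1 :=
    (sqrt_lt' one_pos).2 (by nlinarith [pow_pos (abs_pos.2 hk₀) 2, sq_abs k])
  have hpos : 0 < ∫ z in (0:ℝ)..ellipticK k, (dn z - sqrt (1 - k ^ 2) / dn z) ^ 2 := by
    refine intervalIntegral.integral_zero.symm.trans_lt <|
      intervalIntegral.integral_lt_integral_of_continuousOn_of_le_of_exists_lt (ellipticK_pos hk)
        continuousOn_const (h.continuous_sq_dn_sub_div_dn hk _).continuousOn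
        (fun z _ => sq_nonneg _) ⟨0, ⟨le_rfl, (ellipticK_pos hk).le⟩, ?_⟩
    rw [h.dn_zero, div_one]
    exact pow_pos (sub_pos.2 hsqrt) 2
  linarith [h.integral_sq_dn_sub_div_dn hk]

theorem ellipticE_sq_add_sq_sub_one_mul_ellipticK_sq_pos (h : JacobiSystem k sn cn dn)
    (hk₀ : k ≠ 0) (hk : k ^ 2 < 1) : 0 < ellipticE k ^ 2 + (k ^ 2 - 1) * ellipticK k ^ 2 := by
  have hlt := h.sqrt_one_sub_sq_mul_ellipticK_lt_ellipticE hk₀ hk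
  have hnonneg : 0 ≤ sqrt (1 - k ^ 2) * ellipticK k :=
    mul_nonneg (sqrt_nonneg _) (ellipticK_pos hk).le
  have hfactor : ellipticE k ^ 2 + (k ^ 2 - 1) * ellipticK k ^ 2
      = (ellipticE k - sqrt (1 - k ^ 2) * ellipticK k)
        * (ellipticE k + sqrt (1 - k ^ 2) * ellipticK k) := by
    linear_combination ellipticK k ^ 2 * sq_sqrt (by linarith : (0:ℝ) ≤ 1 - k ^ 2)
  rw [hfactor]
  exact mul_pos (sub_pos.2 hlt) (by linarith)

/-- The first term is integrated by parts, using `k² sn cn dn = -(dn² / 2)'`. -/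
theorem hasDerivAt_primitive_phi_mul_dn (h : JacobiSystem k sn cn dn) (A B z : ℝ) :
    HasDerivAt (fun w => -(dn w ^ 2 / 2) * (A * (∫ y in (0:ℝ)..w, dn y ^ 2) - B * w)
        + A * k ^ 2 / 2 * (sn w * cn w * dn w) + B / 2 * (∫ y in (0:ℝ)..w, dn y ^ 2)
        - A * (1 - k ^ 2) / 2 * w)
      ((k ^ 2 * sn z * cn z * (A * (∫ y in (0:ℝ)..z, dn y ^ 2) - B * z)
        + (B - A) * dn z + k ^ 2 * A * cn z ^ 2 * dn z) * dn z) z := by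
  have hH := h.hasDerivAt_integral_dn_sq z
  have hsq := ((h.hasDerivAt_dn z).pow 2).div_const 2
  have hlin := (hH.const_mul A).sub ((hasDerivAt_id' z).const_mul B)
  have hprod := (((h.hasDerivAt_sn z).mul (h.hasDerivAt_cn z)).mul (h.hasDerivAt_dn z)).const_mul
    (A * k ^ 2 / 2)
  refine ((((hsq.neg.mul hlin).add hprod).add (hH.const_mul (B / 2))).sub
    ((hasDerivAt_id' z).const_mul (A * (1 - k ^ 2) / 2))).congr_deriv ?_
  simp only [Pi.mul_apply, Pi.sub_apply, Pi.neg_apply, Pi.pow_apply]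
  linear_combination (-(A * k ^ 2 / 2) * (dn z ^ 2 + k ^ 2 * sn z ^ 2)) * h.sn_sq_add_cn_sq z
    - (A * (dn z ^ 2 - k ^ 2 * sn z ^ 2 - 1 + k ^ 2) / 2) * h.dn_sq z

theorem integral_phiTilde_mul_dn (h : JacobiSystem k sn cn dn) (hk : k ^ 2 < 1) :
    ∫ z in (-ellipticK k)..ellipticK k, phiTilde k sn cn dn z * dn z
      = ellipticE k ^ 2 + (k ^ 2 - 1) * ellipticK k ^ 2 := by
  have hH : Continuous fun z => ∫ y in (0:ℝ)..z, dn y ^ 2 :=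
    continuous_iff_continuousAt.2 fun z => (h.hasDerivAt_integral_dn_sq z).continuousAt
  have hcont : Continuous fun z => phiTilde k sn cn dn z * dn z := by
    have := h.continuous_sn
    have := h.continuous_cn
    have := h.continuous_dn
    unfold phiTilde
    fun_prop
  rw [intervalIntegral.integral_eq_sub_of_hasDerivAt
    (f' := fun z => phiTilde k sn cn dn z * dn z)
    (fun z _ => h.hasDerivAt_primitive_phi_mul_dn (ellipticK k) (ellipticE k) z)
    (hcont.intervalIntegrable _ _)]
  simp only [h.integral_dn_sq_ellipticK hk, h.integral_dn_sq_neg_ellipticK hk]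
  rw [h.dn_sq, h.dn_sq, h.sn_ellipticK hk, h.cn_ellipticK hk, h.sn_neg_ellipticK hk,
    h.cn_neg_ellipticK hk]
  ring

end JacobiSystem

/-- ⟨φ̃, dn⟩ = E² + (k²−1)K² > 0, hence L₋f = φ̃ has no periodic solution. -/
theorem stmt_7 (k : ℝ) (hk0 : 0 < k) (hk1 : k < 1)
    (sn cn dn : ℝ → ℝ)
    (hsn0 : sn 0 = 0) (hcn0 : cn 0 = 1) (hdn0 : dn 0 = 1)
    (hsn' : ∀ z, HasDerivAt sn (cn z * dn z) z)
    (hcn' : ∀ z, HasDerivAt cn (-(sn z * dn z)) z)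
    (hdn' : ∀ z, HasDerivAt dn (-(k ^ 2 * sn z * cn z)) z)
    (φt : ℝ → ℝ)
    (hφt : ∀ z, φt z = k ^ 2 * sn z * cn z *
        (ellipticK k * (∫ y in (0:ℝ)..z, dn y ^ 2) - ellipticE k * z)
      + (ellipticE k - ellipticK k) * dn z + k ^ 2 * ellipticK k * cn z ^ 2 * dn z) :
    (∫ z in (-ellipticK k)..(ellipticK k), φt z * dn z
        = ellipticE k ^ 2 + (k ^ 2 - 1) * ellipticK k ^ 2) ∧
    (0 < ∫ z in (-ellipticK k)..(ellipticK k), φt z * dn z) ∧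
    ¬ ∃ f : ℝ → ℝ, ContDiff ℝ 2 f ∧ (∀ z, f (z + 2 * ellipticK k) = f z) ∧
        ∀ z, Lm k dn f z = φt z := by
  have h : JacobiSystem k sn cn dn := ⟨hsn0, hcn0, hdn0, hsn', hcn', hdn'⟩
  have hk : k ^ 2 < 1 := by nlinarith
  obtain rfl : φt = phiTilde k sn cn dn := funext hφt
  have hvalue := h.integral_phiTilde_mul_dn hk
  have hpos := h.ellipticE_sq_add_sq_sub_one_mul_ellipticK_sq_pos hk0.ne' hk
  refine ⟨hvalue, hvalue ▸ hpos, ?_⟩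
  rintro ⟨f, hf, hper, hLm⟩
  have horth := h.integral_Lm_mul_dn_eq_zero hk hf hper
  simp only [hLm, hvalue] at horth
  exact hpos.ne' horth
end

section
/- For k ∈ (0,1), ∫_{−K}^{K} [(K·E(z,k) − E·z)·dn z − k²·K·sn z·cn z]·sn z·cn z dz = −(1/k²)·(E² + (k²−1)K²), which is nonzero; hence the equation L₊g = φ has no periodic solution. -/
open MeasureTheory

open Real intervalIntegral

/-!
Substituting `z = F(θ, k)`, the incomplete elliptic integral of the first kind, turns
`(sn, cn, dn)` into `(sin θ, cos θ, Δ(θ))` with `Δ(θ) = √(1 - k² sin² θ)`, by uniqueness for the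
Lipschitz ODE both triples satisfy. Hence at `z = ±K` we have `cn = 0`, `dn = √(1 - k²)` and
`E(±K, k) = ±E`. The integrand `φ · sn · cn` has an explicit primitive, whose values at `±K` give
the closed form. It is nonzero because `√(1 - k²) K < E`: compare `√(1 - k²) / Δ(θ)` with
`Δ(π/2 - θ)`, using `(Δ(θ) Δ(π/2 - θ))² = 1 - k² + (k² sin θ cos θ)²`.
Finally `L₊ (sn · cn) = 0`, so for a `C²` solution `g` of `L₊ g = φ` the integral is the change
of the Wronskian of `g` and `sn · cn` between `-K` and `K`, which vanishes when `g` is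
`2K`-periodic.
-/

lemma integral_zero_neg_of_even {f : ℝ → ℝ} (hf : ∀ x, f (-x) = f x) (c : ℝ) :
    ∫ x in (0:ℝ)..(-c), f x = -∫ x in (0:ℝ)..c, f x := by
  have h := integral_comp_neg (a := 0) (b := c) f
  simp only [hf, neg_zero] at h
  rw [integral_symm, ← h]

lemma eq_of_hasDerivAt_zero {f : ℝ → ℝ} (hf : ∀ z, HasDerivAt f 0 z) (z : ℝ) : f z = f 0 :=
  is_const_of_deriv_eq_zero (fun z => (hf z).differentiableAt) (fun z => (hf z).deriv) z 0

theorem integral_mul_eq_wronskian_sub {g g' g'' h h' q f : ℝ → ℝ} {a b : ℝ}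
    (hg : ∀ z, HasDerivAt g (g' z) z) (hg' : ∀ z, HasDerivAt g' (g'' z) z)
    (hh : ∀ z, HasDerivAt h (h' z) z) (hh' : ∀ z, HasDerivAt h' (-(q z * h z)) z)
    (hf : ∀ z, -g'' z - q z * g z = f z)
    (hint : IntervalIntegrable (fun z => f z * h z) volume a b) :
    ∫ z in a..b, f z * h z = (g b * h' b - g' b * h b) - (g a * h' a - g' a * h a) := by
  refine integral_eq_sub_of_hasDerivAt (f := fun z => g z * h' z - g' z * h z)
    (fun z _ => (((hg z).mul (hh' z)).sub ((hg' z).mul (hh z))).congr_deriv ?_) hint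
  linear_combination h z * hf z

noncomputable def ellipticDelta (k θ : ℝ) : ℝ := √(1 - k ^ 2 * sin θ ^ 2)

noncomputable def ellipticF (k θ : ℝ) : ℝ := ∫ t in (0:ℝ)..θ, 1 / ellipticDelta k t

section ellipticDelta

variable {k : ℝ}

lemma one_sub_sq_le_one_sub_sq_mul_sin_sq (k θ : ℝ) : 1 - k ^ 2 ≤ 1 - k ^ 2 * sin θ ^ 2 := by
  nlinarith [sin_sq_le_one θ, sq_nonneg k]

lemma ellipticDelta_pos (hk : k ^ 2 < 1) (θ : ℝ) : 0 < ellipticDelta k θ :=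
  sqrt_pos.2 <| (sub_pos.2 hk).trans_le (one_sub_sq_le_one_sub_sq_mul_sin_sq k θ)

lemma ellipticDelta_le_one (k θ : ℝ) : ellipticDelta k θ ≤ 1 :=
  sqrt_le_one.2 <| by nlinarith [sq_nonneg (k * sin θ)]

lemma ellipticDelta_sq (hk : k ^ 2 ≤ 1) (θ : ℝ) : ellipticDelta k θ ^ 2 = 1 - k ^ 2 * sin θ ^ 2 :=
  sq_sqrt <| (sub_nonneg.2 hk).trans (one_sub_sq_le_one_sub_sq_mul_sin_sq k θ)

lemma ellipticDelta_neg (k θ : ℝ) : ellipticDelta k (-θ) = ellipticDelta k θ := by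
  simp [ellipticDelta]

lemma ellipticDelta_pi_div_two (k : ℝ) : ellipticDelta k (π / 2) = √(1 - k ^ 2) := by
  simp [ellipticDelta]

lemma continuous_ellipticDelta (k : ℝ) : Continuous (ellipticDelta k) := by
  unfold ellipticDelta; fun_prop

lemma hasDerivAt_ellipticDelta (hk : k ^ 2 < 1) (θ : ℝ) :
    HasDerivAt (ellipticDelta k) (-(k ^ 2 * sin θ * cos θ) / ellipticDelta k θ) θ := by
  have hu := (sub_pos.2 hk).trans_le (one_sub_sq_le_one_sub_sq_mul_sin_sq k θ)
  have h := ((((hasDerivAt_sin θ).pow 2).const_mul (k ^ 2)).const_sub 1).sqrt hu.ne'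
  refine h.congr_deriv ?_
  rw [ellipticDelta, Pi.pow_apply]
  field_simp
  ring

lemma ellipticDelta_mul_ellipticDelta_pi_div_two_sub_sq (hk : k ^ 2 ≤ 1) (θ : ℝ) :
    (ellipticDelta k θ * ellipticDelta k (π / 2 - θ)) ^ 2
      = 1 - k ^ 2 + (k ^ 2 * sin θ * cos θ) ^ 2 := by
  rw [mul_pow, ellipticDelta_sq hk, ellipticDelta_sq hk, sin_pi_div_two_sub]
  linear_combination (-k ^ 2) * sin_sq_add_cos_sq θ

lemma ellipticF_pi_div_two (k : ℝ) : ellipticF k (π / 2) = ellipticK k := rfl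

lemma ellipticF_zero (k : ℝ) : ellipticF k 0 = 0 := integral_same

lemma ellipticF_neg (k θ : ℝ) : ellipticF k (-θ) = -ellipticF k θ :=
  integral_zero_neg_of_even (fun t => by simp only [ellipticDelta_neg]) θ

lemma hasDerivAt_ellipticF (hk : k ^ 2 < 1) (θ : ℝ) :
    HasDerivAt (ellipticF k) (1 / ellipticDelta k θ) θ := by
  have hc : Continuous fun t => 1 / ellipticDelta k t :=
    continuous_const.div (continuous_ellipticDelta k) fun t => (ellipticDelta_pos hk t).ne'
  exact integral_hasDerivAt_right (hc.intervalIntegrable _ _) (hc.stronglyMeasurableAtFilter _ _)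
    hc.continuousAt

end ellipticDelta

section ellipticIntegrals

variable {k : ℝ}

lemma ellipticK_nonneg (hk : k ^ 2 < 1) : 0 ≤ ellipticK k :=
  integral_nonneg (by positivity) fun θ _ => (one_div_pos.2 (ellipticDelta_pos hk θ)).le

lemma sqrt_one_sub_sq_mul_ellipticK_lt_ellipticE (hk0 : k ≠ 0) (hk1 : k ^ 2 < 1) :
    √(1 - k ^ 2) * ellipticK k < ellipticE k := by
  have hK : √(1 - k ^ 2) * ellipticK k
      = ∫ θ in (0:ℝ)..(π / 2), √(1 - k ^ 2) / ellipticDelta k θ := by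
    rw [← ellipticF_pi_div_two, ellipticF, ← intervalIntegral.integral_const_mul]
    simp only [mul_one_div]
  have hE : ellipticE k = ∫ θ in (0:ℝ)..(π / 2), ellipticDelta k (π / 2 - θ) := by
    rw [integral_comp_sub_left (ellipticDelta k), sub_self, sub_zero]
    rfl
  have hΔ := ellipticDelta_pos hk1
  have hprod := ellipticDelta_mul_ellipticDelta_pi_div_two_sub_sq hk1.le
  rw [hK, hE]
  refine integral_lt_integral_of_continuousOn_of_le_of_exists_lt (by positivity)
    (continuous_const.div (continuous_ellipticDelta k) fun θ => (hΔ θ).ne').continuousOn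
    ((continuous_ellipticDelta k).comp (continuous_sub_left _)).continuousOn
    (fun θ _ => ?_) ⟨π / 4, ⟨by positivity, by linarith [pi_pos]⟩, ?_⟩
  · rw [div_le_iff₀' (hΔ θ), sqrt_le_left (mul_pos (hΔ _) (hΔ _)).le, hprod]
    exact le_add_of_nonneg_right (sq_nonneg _)
  · rw [div_lt_iff₀' (hΔ _), sqrt_lt' (mul_pos (hΔ _) (hΔ _)), hprod]
    refine lt_add_of_pos_right _ ?_
    rw [sin_pi_div_four, cos_pi_div_four]
    positivity

lemma ellipticE_sq_add_sq_sub_one_mul_ellipticK_sq_pos (hk0 : k ≠ 0) (hk1 : k ^ 2 < 1) :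
    0 < ellipticE k ^ 2 + (k ^ 2 - 1) * ellipticK k ^ 2 := by
  have h := pow_lt_pow_left₀ (sqrt_one_sub_sq_mul_ellipticK_lt_ellipticE hk0 hk1)
    (mul_nonneg (sqrt_nonneg _) (ellipticK_nonneg hk1)) two_ne_zero
  rw [mul_pow, sq_sqrt (sub_nonneg.2 hk1.le)] at h
  linarith

end ellipticIntegrals

structure IsJacobiTriple (k : ℝ) (sn cn dn : ℝ → ℝ) : Prop where
  sn_zero : sn 0 = 0
  cn_zero : cn 0 = 1
  dn_zero : dn 0 = 1
  hasDerivAt_sn : ∀ z, HasDerivAt sn (cn z * dn z) z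
  hasDerivAt_cn : ∀ z, HasDerivAt cn (-(sn z * dn z)) z
  hasDerivAt_dn : ∀ z, HasDerivAt dn (-(k ^ 2 * sn z * cn z)) z

def jacobiField (k : ℝ) (x : ℝ × ℝ × ℝ) : ℝ × ℝ × ℝ :=
  (x.2.1 * x.2.2, -(x.1 * x.2.2), -(k ^ 2 * x.1 * x.2.1))

lemma exists_lipschitzOnWith_jacobiField (k : ℝ) :
    ∃ C, LipschitzOnWith C (jacobiField k) (Metric.closedBall 0 1) := by
  have h : ContDiff ℝ 1 (jacobiField k) := by unfold jacobiField; fun_prop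
  exact h.contDiffOn.exists_lipschitzOnWith one_ne_zero (convex_closedBall 0 1)
    (isCompact_closedBall 0 1)

lemma mk_mem_closedBall_zero_one {a b c : ℝ} (ha : |a| ≤ 1) (hb : |b| ≤ 1) (hc : |c| ≤ 1) :
    (a, b, c) ∈ Metric.closedBall (0 : ℝ × ℝ × ℝ) 1 := by
  simp [Prod.norm_def, ha, hb, hc]

/-- Jacobi's epsilon function, written `E(z, k)` in the paper. -/
noncomputable def jacobiEpsilon (dn : ℝ → ℝ) (z : ℝ) : ℝ := ∫ y in (0:ℝ)..z, dn y ^ 2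

namespace IsJacobiTriple

variable {k : ℝ} {sn cn dn : ℝ → ℝ}

lemma continuous_sn (J : IsJacobiTriple k sn cn dn) : Continuous sn :=
  continuous_iff_continuousAt.2 fun z => (J.hasDerivAt_sn z).continuousAt

lemma continuous_cn (J : IsJacobiTriple k sn cn dn) : Continuous cn :=
  continuous_iff_continuousAt.2 fun z => (J.hasDerivAt_cn z).continuousAt

lemma continuous_dn (J : IsJacobiTriple k sn cn dn) : Continuous dn :=
  continuous_iff_continuousAt.2 fun z => (J.hasDerivAt_dn z).continuousAt

lemma sn_sq_add_cn_sq (J : IsJacobiTriple k sn cn dn) (z : ℝ) : sn z ^ 2 + cn z ^ 2 = 1 := by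
  have h := eq_of_hasDerivAt_zero (f := fun z => sn z ^ 2 + cn z ^ 2) (fun z =>
    (((J.hasDerivAt_sn z).pow 2).add ((J.hasDerivAt_cn z).pow 2)).congr_deriv (by ring)) z
  simpa [J.sn_zero, J.cn_zero] using h

lemma dn_sq_add_sq_mul_sn_sq (J : IsJacobiTriple k sn cn dn) (z : ℝ) :
    dn z ^ 2 + k ^ 2 * sn z ^ 2 = 1 := by
  have h := eq_of_hasDerivAt_zero (f := fun z => dn z ^ 2 + k ^ 2 * sn z ^ 2) (fun z =>
    (((J.hasDerivAt_dn z).pow 2).add (((J.hasDerivAt_sn z).pow 2).const_mul (k ^ 2))).congr_deriv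
      (by ring)) z
  simpa [J.sn_zero, J.dn_zero] using h

lemma abs_sn_le_one (J : IsJacobiTriple k sn cn dn) (z : ℝ) : |sn z| ≤ 1 :=
  (sq_le_one_iff_abs_le_one _).1 (by nlinarith [J.sn_sq_add_cn_sq z])

lemma abs_cn_le_one (J : IsJacobiTriple k sn cn dn) (z : ℝ) : |cn z| ≤ 1 :=
  (sq_le_one_iff_abs_le_one _).1 (by nlinarith [J.sn_sq_add_cn_sq z])

lemma abs_dn_le_one (J : IsJacobiTriple k sn cn dn) (z : ℝ) : |dn z| ≤ 1 :=
  (sq_le_one_iff_abs_le_one _).1 <| by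
    nlinarith [J.dn_sq_add_sq_mul_sn_sq z, sq_nonneg (k * sn z)]

/-- Both sides solve `Y' = jacobiField k Y / Δ(θ)` with the same initial value and stay in the
unit ball, where `jacobiField k` is Lipschitz. -/
theorem comp_ellipticF (J : IsJacobiTriple k sn cn dn) (hk : k ^ 2 < 1) :
    (fun θ => (sn (ellipticF k θ), cn (ellipticF k θ), dn (ellipticF k θ)))
      = fun θ => (sin θ, cos θ, ellipticDelta k θ) := by
  obtain ⟨C, hC⟩ := exists_lipschitzOnWith_jacobiField k
  have hΔ := ellipticDelta_pos hk
  refine ODE_solution_unique_univ (v := fun θ x => (1 / ellipticDelta k θ) • jacobiField k x)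
    (s := fun _ => Metric.closedBall 0 1) (K := ‖1 / √(1 - k ^ 2)‖₊ * C) (t₀ := 0)
    (fun θ => ((lipschitzWith_smul _).comp_lipschitzOnWith hC).weaken ?_) (fun θ => ⟨?_, ?_⟩)
    (fun θ => ⟨?_, ?_⟩) ?_
  · gcongr
    rw [← NNReal.coe_le_coe, coe_nnnorm, coe_nnnorm, norm_of_nonneg (one_div_pos.2 (hΔ θ)).le,
      norm_of_nonneg (by positivity)]
    exact one_div_le_one_div_of_le (sqrt_pos.2 (sub_pos.2 hk))
      (sqrt_le_sqrt (one_sub_sq_le_one_sub_sq_mul_sin_sq k θ))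
  · have hF := hasDerivAt_ellipticF hk θ
    refine (((J.hasDerivAt_sn _).comp θ hF).prodMk (((J.hasDerivAt_cn _).comp θ hF).prodMk
      ((J.hasDerivAt_dn _).comp θ hF))).congr_deriv ?_
    simp only [jacobiField, Prod.smul_mk, smul_eq_mul]
    ext <;> simp only <;> ring
  · exact mk_mem_closedBall_zero_one (J.abs_sn_le_one _) (J.abs_cn_le_one _) (J.abs_dn_le_one _)
  · refine ((hasDerivAt_sin θ).prodMk ((hasDerivAt_cos θ).prodMk
      (hasDerivAt_ellipticDelta hk θ))).congr_deriv ?_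
    simp only [jacobiField, Prod.smul_mk, smul_eq_mul]
    ext <;> simp only <;> field_simp [(hΔ θ).ne']
  · exact mk_mem_closedBall_zero_one (abs_sin_le_one θ) (abs_cos_le_one θ)
      ((abs_of_pos (hΔ θ)).le.trans (ellipticDelta_le_one k θ))
  · simp [ellipticF, ellipticDelta, J.sn_zero, J.cn_zero, J.dn_zero]

lemma cn_ellipticF (J : IsJacobiTriple k sn cn dn) (hk : k ^ 2 < 1) (θ : ℝ) :
    cn (ellipticF k θ) = cos θ :=
  congrArg (fun p => p.2.1) (congrFun (J.comp_ellipticF hk) θ)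

lemma dn_ellipticF (J : IsJacobiTriple k sn cn dn) (hk : k ^ 2 < 1) (θ : ℝ) :
    dn (ellipticF k θ) = ellipticDelta k θ :=
  congrArg (fun p => p.2.2) (congrFun (J.comp_ellipticF hk) θ)

lemma cn_ellipticK (J : IsJacobiTriple k sn cn dn) (hk : k ^ 2 < 1) : cn (ellipticK k) = 0 := by
  rw [← ellipticF_pi_div_two, J.cn_ellipticF hk, cos_pi_div_two]

lemma cn_neg_ellipticK (J : IsJacobiTriple k sn cn dn) (hk : k ^ 2 < 1) :
    cn (-ellipticK k) = 0 := by
  rw [← ellipticF_pi_div_two, ← ellipticF_neg, J.cn_ellipticF hk, cos_neg, cos_pi_div_two]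

lemma dn_ellipticK (J : IsJacobiTriple k sn cn dn) (hk : k ^ 2 < 1) :
    dn (ellipticK k) = √(1 - k ^ 2) := by
  rw [← ellipticF_pi_div_two, J.dn_ellipticF hk, ellipticDelta_pi_div_two]

lemma dn_neg_ellipticK (J : IsJacobiTriple k sn cn dn) (hk : k ^ 2 < 1) :
    dn (-ellipticK k) = √(1 - k ^ 2) := by
  rw [← ellipticF_pi_div_two, ← ellipticF_neg, J.dn_ellipticF hk, ellipticDelta_neg,
    ellipticDelta_pi_div_two]

lemma jacobiEpsilon_ellipticF (J : IsJacobiTriple k sn cn dn) (hk : k ^ 2 < 1) (θ : ℝ) :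
    jacobiEpsilon dn (ellipticF k θ) = ∫ t in (0:ℝ)..θ, ellipticDelta k t := by
  have hΔ := ellipticDelta_pos hk
  have h := integral_deriv_smul_comp (a := 0) (b := θ) (g := fun z => dn z ^ 2)
    (fun t _ => hasDerivAt_ellipticF hk t)
    (continuous_const.div (continuous_ellipticDelta k) fun t => (hΔ t).ne').continuousOn
    (J.continuous_dn.pow 2)
  rw [ellipticF_zero] at h
  rw [jacobiEpsilon, ← h]
  refine integral_congr fun t _ => ?_
  simp only [Function.comp_apply, smul_eq_mul, J.dn_ellipticF hk]
  field_simp [(hΔ t).ne']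

lemma jacobiEpsilon_ellipticK (J : IsJacobiTriple k sn cn dn) (hk : k ^ 2 < 1) :
    jacobiEpsilon dn (ellipticK k) = ellipticE k :=
  J.jacobiEpsilon_ellipticF hk (π / 2)

lemma jacobiEpsilon_neg_ellipticK (J : IsJacobiTriple k sn cn dn) (hk : k ^ 2 < 1) :
    jacobiEpsilon dn (-ellipticK k) = -ellipticE k := by
  rw [← ellipticF_pi_div_two, ← ellipticF_neg, J.jacobiEpsilon_ellipticF hk,
    integral_zero_neg_of_even (ellipticDelta_neg k)]
  rfl

lemma hasDerivAt_jacobiEpsilon (J : IsJacobiTriple k sn cn dn) (z : ℝ) :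
    HasDerivAt (jacobiEpsilon dn) (dn z ^ 2) z :=
  integral_hasDerivAt_right ((J.continuous_dn.pow 2).intervalIntegrable _ _)
    ((J.continuous_dn.pow 2).stronglyMeasurableAtFilter _ _) (J.continuous_dn.pow 2).continuousAt

lemma continuous_jacobiEpsilon (J : IsJacobiTriple k sn cn dn) : Continuous (jacobiEpsilon dn) :=
  continuous_iff_continuousAt.2 fun z => (J.hasDerivAt_jacobiEpsilon z).continuousAt

lemma hasDerivAt_sn_mul_cn (J : IsJacobiTriple k sn cn dn) (z : ℝ) :
    HasDerivAt (fun z => sn z * cn z) ((cn z ^ 2 - sn z ^ 2) * dn z) z :=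
  ((J.hasDerivAt_sn z).mul (J.hasDerivAt_cn z)).congr_deriv (by ring)

/-- Together with `hasDerivAt_sn_mul_cn`, this says `L₊ (sn · cn) = 0`. -/
lemma hasDerivAt_cn_sq_sub_sn_sq_mul_dn (J : IsJacobiTriple k sn cn dn) (z : ℝ) :
    HasDerivAt (fun z => (cn z ^ 2 - sn z ^ 2) * dn z)
      (-((6 * dn z ^ 2 + k ^ 2 - 2) * (sn z * cn z))) z := by
  refine ((((J.hasDerivAt_cn z).pow 2).sub ((J.hasDerivAt_sn z).pow 2)).mul
    (J.hasDerivAt_dn z)).congr_deriv ?_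
  simp only [Pi.sub_apply, Pi.pow_apply]
  linear_combination (-(k ^ 2 * sn z * cn z)) * J.sn_sq_add_cn_sq z
    + (2 * sn z * cn z) * J.dn_sq_add_sq_mul_sn_sq z

lemma hasDerivAt_primitive_phi_mul_sn_mul_cn (J : IsJacobiTriple k sn cn dn) (hk : k ≠ 0)
    (a b z : ℝ) :
    HasDerivAt (fun z => (-((a * jacobiEpsilon dn z - b * z) * dn z ^ 2)
        + k ^ 2 * a * (sn z * cn z * dn z) - b * jacobiEpsilon dn z + a * (1 - k ^ 2) * z)
          / (2 * k ^ 2))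
      (((a * jacobiEpsilon dn z - b * z) * dn z - k ^ 2 * a * sn z * cn z) * (sn z * cn z)) z := by
  have hE := J.hasDerivAt_jacobiEpsilon z
  have h := ((((((hE.const_mul a).sub ((hasDerivAt_id z).const_mul b)).mul
    ((J.hasDerivAt_dn z).pow 2)).neg.add
    ((((J.hasDerivAt_sn z).mul (J.hasDerivAt_cn z)).mul (J.hasDerivAt_dn z)).const_mul
      (k ^ 2 * a))).sub (hE.const_mul b)).add
    ((hasDerivAt_id z).const_mul (a * (1 - k ^ 2)))).div_const (2 * k ^ 2)
  refine h.congr_deriv ?_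
  simp only [Pi.mul_apply, Pi.sub_apply, Pi.pow_apply, id]
  rw [div_eq_iff (by positivity)]
  linear_combination (a * k ^ 2) * J.sn_sq_add_cn_sq z
    - (a + a * dn z ^ 2 - a * k ^ 2 * cn z ^ 2) * J.dn_sq_add_sq_mul_sn_sq z

theorem integral_phi_mul_sn_mul_cn (J : IsJacobiTriple k sn cn dn) (hk0 : k ≠ 0)
    (hk1 : k ^ 2 < 1) :
    ∫ z in (-ellipticK k)..ellipticK k,
        ((ellipticK k * jacobiEpsilon dn z - ellipticE k * z) * dn z
          - k ^ 2 * ellipticK k * sn z * cn z) * (sn z * cn z)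
      = -(1 / k ^ 2) * (ellipticE k ^ 2 + (k ^ 2 - 1) * ellipticK k ^ 2) := by
  have hcont : Continuous fun z => ((ellipticK k * jacobiEpsilon dn z - ellipticE k * z) * dn z
      - k ^ 2 * ellipticK k * sn z * cn z) * (sn z * cn z) := by
    have := J.continuous_jacobiEpsilon
    have := J.continuous_sn
    have := J.continuous_cn
    have := J.continuous_dn
    fun_prop
  rw [integral_eq_sub_of_hasDerivAt
    (fun z _ => J.hasDerivAt_primitive_phi_mul_sn_mul_cn hk0 _ _ z) (hcont.intervalIntegrable _ _)]
  simp only [J.cn_ellipticK hk1, J.cn_neg_ellipticK hk1, J.dn_ellipticK hk1,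
    J.dn_neg_ellipticK hk1, J.jacobiEpsilon_ellipticK hk1, J.jacobiEpsilon_neg_ellipticK hk1,
    sq_sqrt (sub_nonneg.2 hk1.le), mul_zero, zero_mul]
  field_simp
  ring

theorem integral_Lp_mul_sn_mul_cn_eq_zero (J : IsJacobiTriple k sn cn dn) (hk : k ^ 2 < 1)
    {g : ℝ → ℝ} (hg : ContDiff ℝ 2 g) (hper : ∀ z, g (z + 2 * ellipticK k) = g z) :
    ∫ z in (-ellipticK k)..ellipticK k, Lp k dn g z * (sn z * cn z) = 0 := by
  obtain ⟨hg₁, -, hg₂⟩ := contDiff_succ_iff_deriv.1 (show ContDiff ℝ (1 + 1) g from hg)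
  have hg'' : Continuous (deriv (deriv g)) := (contDiff_one_iff_deriv.1 hg₂).2
  have hL : Continuous (Lp k dn g) := by
    have := J.continuous_dn
    have := hg₁.continuous
    exact (by fun_prop :
      Continuous fun z => -deriv (deriv g) z - (6 * dn z ^ 2 + k ^ 2 - 2) * g z)
  rw [integral_mul_eq_wronskian_sub (f := fun z => Lp k dn g z) (fun z => (hg₁ z).hasDerivAt)
    (fun z => ((hg₂.differentiable one_ne_zero) z).hasDerivAt) J.hasDerivAt_sn_mul_cn
    J.hasDerivAt_cn_sq_sub_sn_sq_mul_dn (fun z => rfl)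
    ((hL.mul (J.continuous_sn.mul J.continuous_cn)).intervalIntegrable _ _)]
  have hgK : g (-ellipticK k) = g (ellipticK k) := by
    rw [← hper (-ellipticK k)]; ring_nf
  have hsnK := J.sn_sq_add_cn_sq (ellipticK k)
  have hsnK' := J.sn_sq_add_cn_sq (-ellipticK k)
  simp only [J.cn_ellipticK hk, J.cn_neg_ellipticK hk, J.dn_ellipticK hk,
    J.dn_neg_ellipticK hk, hgK, mul_zero, sub_zero] at hsnK hsnK' ⊢
  linear_combination (g (ellipticK k) * √(1 - k ^ 2)) * (hsnK' - hsnK)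

end IsJacobiTriple

/-- ⟨φ, sn·cn⟩ = −(1/k²)(E² + (k²−1)K²) ≠ 0, hence L₊g = φ has no
periodic solution. -/
theorem stmt_8 (k : ℝ) (hk0 : 0 < k) (hk1 : k < 1)
    (sn cn dn : ℝ → ℝ)
    (hsn0 : sn 0 = 0) (hcn0 : cn 0 = 1) (hdn0 : dn 0 = 1)
    (hsn' : ∀ z, HasDerivAt sn (cn z * dn z) z)
    (hcn' : ∀ z, HasDerivAt cn (-(sn z * dn z)) z)
    (hdn' : ∀ z, HasDerivAt dn (-(k ^ 2 * sn z * cn z)) z)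
    (φ : ℝ → ℝ)
    (hφ : ∀ z, φ z = (ellipticK k * (∫ y in (0:ℝ)..z, dn y ^ 2) - ellipticE k * z) * dn z
      - k ^ 2 * ellipticK k * sn z * cn z) :
    (∫ z in (-ellipticK k)..(ellipticK k), φ z * (sn z * cn z)
        = -(1 / k ^ 2) * (ellipticE k ^ 2 + (k ^ 2 - 1) * ellipticK k ^ 2)) ∧
    (∫ z in (-ellipticK k)..(ellipticK k), φ z * (sn z * cn z)) ≠ 0 ∧
    ¬ ∃ g : ℝ → ℝ, ContDiff ℝ 2 g ∧ (∀ z, g (z + 2 * ellipticK k) = g z) ∧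
        ∀ z, Lp k dn g z = φ z := by
  have J : IsJacobiTriple k sn cn dn := ⟨hsn0, hcn0, hdn0, hsn', hcn', hdn'⟩
  have hk : k ^ 2 < 1 := by nlinarith
  have hI : ∫ z in (-ellipticK k)..(ellipticK k), φ z * (sn z * cn z)
      = -(1 / k ^ 2) * (ellipticE k ^ 2 + (k ^ 2 - 1) * ellipticK k ^ 2) := by
    simp_rw [hφ]
    exact J.integral_phi_mul_sn_mul_cn hk0.ne' hk
  have hne : -(1 / k ^ 2) * (ellipticE k ^ 2 + (k ^ 2 - 1) * ellipticK k ^ 2) ≠ 0 :=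
    mul_ne_zero (by simp [hk0.ne'])
      (ellipticE_sq_add_sq_sub_one_mul_ellipticK_sq_pos hk0.ne' hk).ne'
  refine ⟨hI, hI ▸ hne, ?_⟩
  rintro ⟨g, hg, hper, hL⟩
  apply hne
  rw [← hI, ← J.integral_Lp_mul_sn_mul_cn_eq_zero hk hg hper]
  simp_rw [hL]
end
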